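/- Let x ∈ c₀ be a smooth point. Then there exists a positive integer n such that |x(n)| = ‖x‖ and |x(m)| < ‖x‖ for all m ≠ n, and consequently c₀ = span{eₙ} ⊕_∞ M where eₙ is the n-th unit vector and M = {y ∈ c₀ : y(n) = 0}, with dist(x, span{eₙ}) < ‖x‖. -/

import Mathlib

open Filter Topology Metric Set NormedSpace MeasureTheory

noncomputable section

/-- The norm of `X` is Fréchet differentiable at `x`: there is a continuous linear
functional `f` with `lim_{y→0} (‖x+y‖ - ‖x‖ - f y)/‖y‖ = 0`. -/
def FrechetSmoothPoint (X : Type*) [NormedAddCommGroup X] [NormedSpace ℝ X] (x : X) : Prop :=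
  ∃ f : X →L[ℝ] ℝ,
    Tendsto (fun y : X => (‖x + y‖ - ‖x‖ - f y) / ‖y‖) (𝓝[≠] (0 : X)) (𝓝 0)

/-- `x` is a smooth point: it is nonzero and there is exactly one norm-one functional
attaining the norm at `x`. -/
def SmoothPoint (X : Type*) [NormedAddCommGroup X] [NormedSpace ℝ X] (x : X) : Prop :=
  x ≠ 0 ∧ ∃! f : StrongDual ℝ X, ‖f‖ = 1 ∧ f x = ‖x‖

/-- `x` is a very smooth point: it is a smooth point whose canonical image in the bidual
is a smooth point of the bidual. -/
def VerySmoothPoint (X : Type*) [NormedAddCommGroup X] [NormedSpace ℝ X] (x : X) : Prop :=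
  SmoothPoint X x ∧ SmoothPoint (StrongDual ℝ (StrongDual ℝ X)) (inclusionInDoubleDual ℝ X x)

/-- `X = M ⊕_∞ N`: `M, N` are closed subspaces with trivial intersection whose sum is
everything, and `‖m + n‖ = max ‖m‖ ‖n‖` for `m ∈ M`, `n ∈ N`. -/
def MSumDecomp {X : Type*} [NormedAddCommGroup X] [NormedSpace ℝ X]
    (M N : Submodule ℝ X) : Prop :=
  IsClosed (M : Set X) ∧ IsClosed (N : Set X) ∧ M ⊓ N = ⊥ ∧ M ⊔ N = ⊤ ∧
    ∀ m ∈ M, ∀ n ∈ N, ‖m + n‖ = max ‖m‖ ‖n‖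

/-- `X = M ⊕₁ N`: `M, N` are closed subspaces with trivial intersection whose sum is
everything, and `‖m + n‖ = ‖m‖ + ‖n‖` for `m ∈ M`, `n ∈ N`; such `M` is an L-summand. -/
def LSumDecomp {X : Type*} [NormedAddCommGroup X] [NormedSpace ℝ X]
    (M N : Submodule ℝ X) : Prop :=
  IsClosed (M : Set X) ∧ IsClosed (N : Set X) ∧ M ⊓ N = ⊥ ∧ M ⊔ N = ⊤ ∧
    ∀ m ∈ M, ∀ n ∈ N, ‖m + n‖ = ‖m‖ + ‖n‖

/-- The state space `S_x` of a vector `x`. -/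
def StateSpace {X : Type*} [NormedAddCommGroup X] [NormedSpace ℝ X] (x : X) :
    Set (StrongDual ℝ X) :=
  {f : StrongDual ℝ X | ‖f‖ ≤ 1 ∧ f x = 1}

/-- `x` is a quasi-polyhedral (QP) point: for some `δ > 0`, every norm-one `z` with
`‖z - x‖ < δ` has `S_z ⊆ S_x`. -/
def QPPoint (X : Type*) [NormedAddCommGroup X] [NormedSpace ℝ X] (x : X) : Prop :=
  ∃ δ > (0 : ℝ), ∀ z : X, ‖z‖ = 1 → ‖z - x‖ < δ → StateSpace z ⊆ StateSpace x

/-- `X` is an `L¹`-predual space: `X*` is isometrically isomorphic to `L¹(μ)` for some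
(positive) measure `μ`. -/
def IsL1Predual (X : Type*) [NormedAddCommGroup X] [NormedSpace ℝ X] : Prop :=
  ∃ (α : Type) (_ : MeasurableSpace α) (μ : Measure α),
    Nonempty (StrongDual ℝ X ≃ₗᵢ[ℝ] Lp ℝ 1 μ)

/-- The space `c₀` of real sequences converging to `0`, with the supremum norm. -/
abbrev c₀ : Type := ZeroAtInftyContinuousMap ℕ ℝ

/-- The `n`-th standard unit vector of `c₀`. -/
def unitVec (n : ℕ) : c₀ where
  toFun := fun m => if m = n then 1 else 0
  continuous_toFun := continuous_of_discreteTopology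
  zero_at_infty' := by
    refine tendsto_nhds_of_eventually_eq ?_
    filter_upwards [isCompact_singleton (x := n) |>.compl_mem_cocompact] with m hm
    simp only [Set.mem_compl_iff, Set.mem_singleton_iff] at hm
    simp [hm]

/-- The subspace of sequences of `c₀` vanishing at the coordinate `n`. -/
def coordZero (n : ℕ) : Submodule ℝ c₀ where
  carrier := {y : c₀ | y n = 0}
  add_mem' := fun {f g} hf hg => by
    simp only [Set.mem_setOf_eq] at *
    simp [hf, hg]
  zero_mem' := by simp
  smul_mem' := fun c f hf => by
    simp only [Set.mem_setOf_eq] at *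
    simp [hf]

/-!
The norm of `x ∈ c₀` is attained at some coordinate `n`, since `x` tends to `0`. If it were also
attained at `m ≠ n`, then `sign (x n) • δₙ` and `sign (x m) • δₘ` would be two different norm-one
functionals norming `x`, against smoothness. So `|x m| < ‖x‖` off `n`; the sup-norm of `x` with its
`n`-th coordinate deleted is again attained, hence `< ‖x‖`, which bounds the distance to `span {eₙ}`.
-/

open scoped ZeroAtInfty

namespace ZeroAtInftyContinuousMap

section Norm

variable {α β : Type*} [TopologicalSpace α] [NormedAddCommGroup β]

theorem norm_apply_le (f : C₀(α, β)) (a : α) : ‖f a‖ ≤ ‖f‖ := by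
  rw [← norm_toBCF_eq_norm]
  exact f.toBCF.norm_coe_le_norm a

theorem norm_le_iff {f : C₀(α, β)} {C : ℝ} (hC : 0 ≤ C) : ‖f‖ ≤ C ↔ ∀ a, ‖f a‖ ≤ C := by
  rw [← norm_toBCF_eq_norm]
  exact BoundedContinuousFunction.norm_le hC

theorem exists_norm_eq_norm_apply [Nonempty α] (f : C₀(α, β)) : ∃ a, ‖f‖ = ‖f a‖ := by
  by_cases hf : f = 0
  · exact ⟨Classical.arbitrary α, by simp [hf]⟩
  obtain ⟨a₀, ha₀⟩ : ∃ a, f a ≠ 0 := by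
    by_contra! h
    exact hf (ext h)
  have hsmall : ∀ᶠ a in cocompact α, ‖f a‖ ≤ ‖f a₀‖ :=
    (tendsto_norm_zero.comp f.zero_at_infty').eventually (ge_mem_nhds (norm_pos_iff.2 ha₀))
  obtain ⟨a, ha⟩ := (continuous_norm.comp f.continuous).exists_forall_ge' a₀ hsmall
  exact ⟨a, le_antisymm ((norm_le_iff (norm_nonneg _)).2 ha) (f.norm_apply_le a)⟩

variable (𝕜 : Type*) [NontriviallyNormedField 𝕜] [NormedSpace 𝕜 β]

def evalCLM (a : α) : C₀(α, β) →L[𝕜] β :=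
  LinearMap.mkContinuous
    { toFun := fun f => f a
      map_add' := fun _ _ => rfl
      map_smul' := fun _ _ => rfl }
    1 (fun f => by simpa using f.norm_apply_le a)

theorem norm_evalCLM_le (a : α) : ‖(evalCLM 𝕜 a : C₀(α, β) →L[𝕜] β)‖ ≤ 1 :=
  LinearMap.mkContinuous_norm_le _ zero_le_one _

end Norm

section Real

variable {α : Type*} [TopologicalSpace α]

theorem abs_apply_le_norm (f : C₀(α, ℝ)) (a : α) : |f a| ≤ ‖f‖ :=
  f.norm_apply_le a

theorem exists_abs_apply_eq_norm [Nonempty α] (f : C₀(α, ℝ)) : ∃ a, |f a| = ‖f‖ :=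
  (f.exists_norm_eq_norm_apply).imp fun _ ha => ha.symm

def signEvalCLM (f : C₀(α, ℝ)) (a : α) : StrongDual ℝ C₀(α, ℝ) :=
  (SignType.sign (f a) : ℝ) • evalCLM ℝ a

theorem signEvalCLM_apply (f g : C₀(α, ℝ)) (a : α) :
    signEvalCLM f a g = SignType.sign (f a) * g a := rfl

theorem norm_signEvalCLM_le (f : C₀(α, ℝ)) (a : α) : ‖signEvalCLM f a‖ ≤ 1 := by
  have hsign : ‖(SignType.sign (f a) : ℝ)‖ ≤ 1 := by
    rcases SignType.sign (f a) with _ | _ | _ <;> simp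
  calc ‖signEvalCLM f a‖ ≤ ‖(SignType.sign (f a) : ℝ)‖ * ‖evalCLM ℝ a‖ :=
        ContinuousLinearMap.opNorm_smul_le _ _
    _ ≤ 1 := mul_le_one₀ hsign (ContinuousLinearMap.opNorm_nonneg _) (norm_evalCLM_le ℝ a)

theorem signEvalCLM_apply_self (f : C₀(α, ℝ)) (a : α) : signEvalCLM f a f = |f a| :=
  sign_mul_self (f a)

end Real

end ZeroAtInftyContinuousMap

open ZeroAtInftyContinuousMap

section SmoothPoint

variable {X : Type*} [NormedAddCommGroup X] [NormedSpace ℝ X]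

theorem norm_eq_one_of_apply_eq_norm {x : X} (hx : x ≠ 0) {φ : StrongDual ℝ X} (hφ : ‖φ‖ ≤ 1)
    (hφx : φ x = ‖x‖) : ‖φ‖ = 1 := by
  refine le_antisymm hφ (le_of_mul_le_mul_right ?_ (norm_pos_iff.2 hx))
  calc 1 * ‖x‖ = φ x := by rw [one_mul, hφx]
    _ ≤ ‖φ‖ * ‖x‖ := (le_abs_self _).trans (φ.le_opNorm x)

theorem SmoothPoint.eq_of_norm_le_one {x : X} (hx : SmoothPoint X x) {φ ψ : StrongDual ℝ X}
    (hφ : ‖φ‖ ≤ 1) (hφx : φ x = ‖x‖) (hψ : ‖ψ‖ ≤ 1) (hψx : ψ x = ‖x‖) : φ = ψ :=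
  hx.2.unique ⟨norm_eq_one_of_apply_eq_norm hx.1 hφ hφx, hφx⟩
    ⟨norm_eq_one_of_apply_eq_norm hx.1 hψ hψx, hψx⟩

end SmoothPoint

@[simp]
theorem unitVec_apply (n m : ℕ) : unitVec n m = if m = n then 1 else 0 := rfl

theorem norm_unitVec (n : ℕ) : ‖unitVec n‖ = 1 := by
  refine le_antisymm ((norm_le_iff zero_le_one).2 fun m => ?_) ?_
  · by_cases h : m = n <;> simp [h]
  · simpa using (unitVec n).norm_apply_le n

theorem SmoothPoint.eq_of_abs_apply_eq_norm {x : c₀} (hx : SmoothPoint c₀ x) {m n : ℕ}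
    (hm : |x m| = ‖x‖) (hn : |x n| = ‖x‖) : m = n := by
  by_contra hmn
  have heq : signEvalCLM x n = signEvalCLM x m :=
    hx.eq_of_norm_le_one (norm_signEvalCLM_le x n) (by rw [signEvalCLM_apply_self, hn])
      (norm_signEvalCLM_le x m) (by rw [signEvalCLM_apply_self, hm])
  have hvanish : signEvalCLM x n (unitVec n) = 0 := by
    rw [heq, signEvalCLM_apply, unitVec_apply, if_neg hmn, mul_zero]
  refine hx.1 (norm_eq_zero.1 ?_)
  calc ‖x‖ = |x n| := hn.symm
    _ = signEvalCLM x n (unitVec n) * x n := by simp [signEvalCLM_apply, sign_mul_self]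
    _ = 0 := by rw [hvanish, zero_mul]

@[simp]
theorem mem_coordZero {n : ℕ} {y : c₀} : y ∈ coordZero n ↔ y n = 0 := Iff.rfl

theorem coordZero_eq_ker (n : ℕ) : coordZero n = (evalCLM ℝ n : c₀ →L[ℝ] ℝ).ker := rfl

theorem smul_unitVec_add_apply {n : ℕ} {y : c₀} (hy : y ∈ coordZero n) (c : ℝ) (k : ℕ) :
    (c • unitVec n + y) k = if k = n then c else y k := by
  by_cases hk : k = n
  · simp [hk, mem_coordZero.1 hy]
  · simp [hk]

theorem norm_smul_unitVec_add {n : ℕ} {y : c₀} (hy : y ∈ coordZero n) (c : ℝ) :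
    ‖c • unitVec n + y‖ = max |c| ‖y‖ := by
  refine le_antisymm ((norm_le_iff (le_max_of_le_right (norm_nonneg y))).2 fun k => ?_)
    (max_le ?_ ((norm_le_iff (norm_nonneg _)).2 fun k => ?_))
  · rw [smul_unitVec_add_apply hy]
    split_ifs
    · exact le_max_left _ _
    · exact le_max_of_le_right (y.norm_apply_le k)
  · simpa [smul_unitVec_add_apply hy] using (c • unitVec n + y).abs_apply_le_norm n
  · refine le_trans ?_ ((c • unitVec n + y).norm_apply_le k)
    rw [smul_unitVec_add_apply hy]
    split_ifs with hk
    · simp [hk, mem_coordZero.1 hy]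
    · exact le_rfl

theorem mSumDecomp_span_unitVec_coordZero (n : ℕ) :
    MSumDecomp (Submodule.span ℝ {unitVec n}) (coordZero n) := by
  refine ⟨Submodule.closed_of_finiteDimensional _, ?_, ?_, ?_, ?_⟩
  · rw [coordZero_eq_ker]
    exact ContinuousLinearMap.isClosed_ker _
  · refine (Submodule.eq_bot_iff _).2 fun y hy => ?_
    obtain ⟨hspan, hc⟩ := Submodule.mem_inf.1 hy
    obtain ⟨c, rfl⟩ := Submodule.mem_span_singleton.1 hspan
    have hc0 : c = 0 := by simpa using hc
    simp [hc0]
  · refine Submodule.eq_top_iff'.2 fun y => Submodule.mem_sup.2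
      ⟨y n • unitVec n, Submodule.smul_mem _ _ (Submodule.mem_span_singleton_self _),
        y - y n • unitVec n, by simp, add_sub_cancel _ _⟩
  · rintro _ hm y hy
    obtain ⟨c, rfl⟩ := Submodule.mem_span_singleton.1 hm
    rw [norm_smul_unitVec_add hy, norm_smul, norm_unitVec, mul_one, Real.norm_eq_abs]

theorem infDist_span_unitVec_lt {x : c₀} (hx : x ≠ 0) {n : ℕ} (hlt : ∀ m ≠ n, |x m| < ‖x‖) :
    infDist x (Submodule.span ℝ {unitVec n} : Set c₀) < ‖x‖ := by
  have hmem : x n • unitVec n ∈ Submodule.span ℝ {unitVec n} :=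
    Submodule.smul_mem _ _ (Submodule.mem_span_singleton_self _)
  obtain ⟨m, hm⟩ := (x - x n • unitVec n).exists_abs_apply_eq_norm
  calc infDist x (Submodule.span ℝ {unitVec n} : Set c₀)
      ≤ ‖x - x n • unitVec n‖ := dist_eq_norm x _ ▸ infDist_le_dist_of_mem hmem
    _ = |(x - x n • unitVec n) m| := hm.symm
    _ < ‖x‖ := by
      by_cases hmn : m = n
      · simpa [hmn] using norm_pos_iff.2 hx
      · simpa [hmn] using hlt m hmn

theorem smooth_point_c0_decomposition (x : c₀) (hx : SmoothPoint c₀ x) :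
    ∃ n : ℕ, |x n| = ‖x‖ ∧ (∀ m : ℕ, m ≠ n → |x m| < ‖x‖) ∧
      MSumDecomp (Submodule.span ℝ {unitVec n}) (coordZero n) ∧
      infDist x ((Submodule.span ℝ {unitVec n} : Submodule ℝ c₀) : Set c₀) < ‖x‖ := by
  obtain ⟨n, hn⟩ := x.exists_abs_apply_eq_norm
  have hlt : ∀ m : ℕ, m ≠ n → |x m| < ‖x‖ := fun m hmn =>
    (x.abs_apply_le_norm m).lt_of_ne fun hm => hmn (hx.eq_of_abs_apply_eq_norm hm hn)
  exact ⟨n, hn, hlt, mSumDecomp_span_unitVec_coordZero n, infDist_span_unitVec_lt hx.1 hlt⟩
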